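/- arXiv:1811.04846 — 2 statements merged into one kernel-verified Lean document; each statement's English description precedes it below -/
import Mathlib

section
/- Let α be a measure on ℝ with finite moments μ_n = ∫ x^n dα(x) for 0 ≤ n ≤ 2N, and let H be the N × (N+1) Hankel matrix with entries H_{ij} = μ_{i+j}. If rank(H) = d < N, then there exists a nonzero polynomial p of degree at most d such that ∫ p(x) x^j dα(x) = 0 for all j = 0, ..., N. -/
open MeasureTheory Polynomial

theorem stmt_1 (N : ℕ) (hN : 0 < N) (α : Measure ℝ)
    (hmom : ∀ n ≤ 2 * N, Integrable (fun x : ℝ => x ^ n) α)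
    (μ : ℕ → ℝ) (hμ : ∀ n, μ n = ∫ x, x ^ n ∂α)
    (H : Matrix (Fin N) (Fin (N + 1)) ℝ)
    (hH : ∀ i j, H i j = μ ((i : ℕ) + (j : ℕ)))
    (d : ℕ) (hrank : H.rank = d) (hd : d < N) :
    ∃ p : ℝ[X], p ≠ 0 ∧ p.natDegree ≤ d ∧
      ∀ j ≤ N, ∫ x, p.eval x * x ^ j ∂α = 0 := by
  classical
  -- dimension of the row span is d
  have hrowspan : Module.finrank ℝ (Submodule.span ℝ (Set.range H)) = d := by
    rw [← hrank, ← Matrix.rank_transpose, Matrix.rank_eq_finrank_span_cols,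
      Matrix.col_transpose]; rfl
  -- the first d+1 rows
  set v : Fin (d + 1) → (Fin (N + 1) → ℝ) := fun i => H (Fin.castLE hd i) with hv
  have hnotli : ¬ LinearIndependent ℝ v := by
    intro hli
    have h1 : Module.finrank ℝ (Submodule.span ℝ (Set.range v)) = d + 1 := by
      rw [finrank_span_eq_card hli, Fintype.card_fin]
    have hle : Submodule.span ℝ (Set.range v) ≤ Submodule.span ℝ (Set.range H) :=
      Submodule.span_mono (by rintro _ ⟨i, rfl⟩; exact ⟨Fin.castLE hd i, rfl⟩)
    have := Submodule.finrank_mono hle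
    omega
  obtain ⟨g, hgsum, i₀, hgi₀⟩ := Fintype.not_linearIndependent_iff.mp hnotli
  set p : ℝ[X] := ∑ i : Fin (d + 1), C (g i) * X ^ (i : ℕ) with hp
  have hcoeff : ∀ i : Fin (d + 1), p.coeff (i : ℕ) = g i := by
    intro i
    rw [hp, Polynomial.finset_sum_coeff]
    have : ∀ j : Fin (d + 1),
        (C (g j) * X ^ (j : ℕ)).coeff (i : ℕ) = if j = i then g j else 0 := by
      intro j
      rw [Polynomial.coeff_C_mul, Polynomial.coeff_X_pow]
      simp [Fin.val_eq_val, eq_comm]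
    rw [Finset.sum_congr rfl fun j _ => this j, Finset.sum_ite_eq' _ i]
    simp
  refine ⟨p, ?_, ?_, ?_⟩
  · intro h0
    apply hgi₀
    rw [← hcoeff i₀, h0, Polynomial.coeff_zero]
  · apply Polynomial.natDegree_sum_le_of_forall_le
    intro i _
    refine (Polynomial.natDegree_C_mul_le _ _).trans ?_
    rw [Polynomial.natDegree_X_pow]
    omega
  · intro j hj
    have hint : ∀ i : Fin (d + 1),
        Integrable (fun x : ℝ => g i * x ^ ((i : ℕ) + j)) α := by
      intro i
      exact (hmom _ (by have := i.isLt; omega)).const_mul _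
    have heval : ∀ x : ℝ, p.eval x * x ^ j = ∑ i : Fin (d + 1), g i * x ^ ((i : ℕ) + j) := by
      intro x
      rw [hp, Polynomial.eval_finset_sum, Finset.sum_mul]
      refine Finset.sum_congr rfl fun i _ => ?_
      simp [pow_add, mul_assoc]
    calc ∫ x, p.eval x * x ^ j ∂α
        = ∫ x, ∑ i : Fin (d + 1), g i * x ^ ((i : ℕ) + j) ∂α := by
          simp only [heval]
      _ = ∑ i : Fin (d + 1), ∫ x, g i * x ^ ((i : ℕ) + j) ∂α :=
          integral_finset_sum _ fun i _ => hint i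
      _ = ∑ i : Fin (d + 1), g i * μ ((i : ℕ) + j) := by
          refine Finset.sum_congr rfl fun i _ => ?_
          rw [integral_const_mul, hμ]
      _ = 0 := by
          have hj' : j < N + 1 := by omega
          have := congrFun hgsum ⟨j, hj'⟩
          simpa [hv, hH, Fin.coe_castLE] using this
end

section
/- Let α be a positive measure on [a,b] with finite moments and infinite support, and let {p^{(k)}} be the monic orthogonal polynomials with respect to α. Then the quadrature rule whose nodes are the k+1 zeros x_0, ..., x_k of p^{(k+1)} and whose weights are w_n = ∫ ℓ_n(x) dα(x) integrates every polynomial of degree ≤ 2k+1 exactly: ∫ q dα = Σ_{n=0}^k w_n q(x_n) for all q with deg q ≤ 2k+1. -/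
open MeasureTheory Polynomial

theorem stmt_16 (a b : ℝ) (hab : a < b) (α : Measure ℝ)
    (hsupp : α (Set.Icc a b)ᶜ = 0)
    (hmom : ∀ n : ℕ, Integrable (fun x : ℝ => x ^ n) α)
    (hinf : ∀ s : Finset ℝ, α ((s : Set ℝ)ᶜ) ≠ 0)
    (p : ℕ → ℝ[X]) (hmonic : ∀ n, (p n).Monic) (hdeg : ∀ n, (p n).natDegree = n)
    (hortho : ∀ j k, j ≠ k → ∫ x, (p j).eval x * (p k).eval x ∂α = 0)
    (k : ℕ) (x : Fin (k + 1) → ℝ) (hx : Function.Injective x)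
    (hroots : p (k + 1) = ∏ n : Fin (k + 1), (X - C (x n)))
    (w : Fin (k + 1) → ℝ)
    (hw : ∀ n, w n = ∫ t, (Lagrange.basis Finset.univ x n).eval t ∂α) :
    ∀ q : ℝ[X], q.natDegree ≤ 2 * k + 1 →
      ∫ t, q.eval t ∂α = ∑ n : Fin (k + 1), w n * q.eval (x n) := by
  -- every polynomial is integrable
  have hint : ∀ q : ℝ[X], Integrable (fun t : ℝ => q.eval t) α := by
    intro q
    have heq : (fun t : ℝ => q.eval t) =
        fun t => ∑ i ∈ Finset.range (q.natDegree + 1), q.coeff i * t ^ i := by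
      funext t; exact q.eval_eq_sum_range t
    rw [heq]
    exact integrable_finset_sum _ (fun i _ => (hmom i).const_mul _)
  -- orthogonality of p (k+1) against polynomials of degree ≤ k
  have key : ∀ d, d ≤ k + 1 → ∀ s : ℝ[X], s.natDegree < d →
      ∫ t, (p (k + 1)).eval t * s.eval t ∂α = 0 := by
    intro d
    induction d with
    | zero => intro _ s hs; omega
    | succ d ih =>
      intro hd s hs
      by_cases h0 : s = 0
      · simp [h0]
      set m := s.natDegree with hm
      set c := s.coeff m with hc
      set s' := s - C c * p m with hs'def
      have hmk : m ≠ k + 1 := by omega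
      have hcoeffm : (p m).coeff m = 1 := by
        have := (hmonic m).leadingCoeff
        rwa [Polynomial.leadingCoeff, hdeg] at this
      have hsplit : ∀ t : ℝ, (p (k + 1)).eval t * s.eval t =
          c * ((p (k + 1)).eval t * (p m).eval t) + (p (k + 1)).eval t * s'.eval t := by
        intro t; simp [hs'def]; ring
      have hint1 : Integrable (fun t : ℝ => c * ((p (k + 1)).eval t * (p m).eval t)) α := by
        simpa using hint (C c * (p (k + 1) * p m))
      have hint2 : Integrable (fun t : ℝ => (p (k + 1)).eval t * s'.eval t) α := by
        simpa using hint (p (k + 1) * s')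
      calc ∫ t, (p (k + 1)).eval t * s.eval t ∂α
          = ∫ t, (c * ((p (k + 1)).eval t * (p m).eval t)
              + (p (k + 1)).eval t * s'.eval t) ∂α := by
            exact integral_congr_ae (Filter.Eventually.of_forall hsplit)
        _ = (∫ t, c * ((p (k + 1)).eval t * (p m).eval t) ∂α)
              + ∫ t, (p (k + 1)).eval t * s'.eval t ∂α := integral_add hint1 hint2
        _ = 0 := by
            rw [integral_const_mul, hortho (k + 1) m (fun h => hmk h.symm)]
            simp only [mul_zero, zero_add]
            by_cases h0' : s' = 0
            · simp [h0']
            · apply ih (by omega) s'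
              have hcoeff : s'.coeff m = 0 := by
                simp [hs'def, hcoeffm, hc]
              have hle : s'.natDegree ≤ m := by
                refine le_trans (Polynomial.natDegree_sub_le _ _) ?_
                simp only [max_le_iff]
                constructor
                · exact le_rfl
                · exact le_trans (Polynomial.natDegree_C_mul_le _ _) (le_of_eq (hdeg m))
              have hlt : s'.natDegree < m := by
                rcases lt_or_eq_of_le hle with h | h
                · exact h
                · exfalso
                  apply h0'
                  have : s'.leadingCoeff = 0 := by rw [Polynomial.leadingCoeff, h, hcoeff]
                  exact Polynomial.leadingCoeff_eq_zero.mp this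
              omega
  intro q hq
  have hmP := hmonic (k + 1)
  set P := p (k + 1) with hP
  set s := q /ₘ P with hs
  set r := q %ₘ P with hr
  have hqdecomp : q = P * s + r := by
    have h := Polynomial.modByMonic_add_div q P
    rw [← h]; ring
  have hdegP : P.degree = ((k + 1 : ℕ) : WithBot ℕ) := by
    rw [Polynomial.degree_eq_natDegree hmP.ne_zero, hdeg]
  have hrdeg : r.degree < ((k + 1 : ℕ) : WithBot ℕ) := by
    have := Polynomial.degree_modByMonic_lt q hmP
    rwa [hdegP] at this
  have hsdeg : s.natDegree < k + 1 := by
    have h := Polynomial.natDegree_divByMonic q hmP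
    have hPn : P.natDegree = k + 1 := hdeg (k + 1)
    show (q /ₘ P).natDegree < k + 1
    omega
  -- nodes are roots of P
  have hroot : ∀ n, P.eval (x n) = 0 := by
    intro n
    rw [hroots, Polynomial.eval_prod]
    exact Finset.prod_eq_zero (Finset.mem_univ n) (by simp)
  have hrq : ∀ n, r.eval (x n) = q.eval (x n) := by
    intro n
    conv_rhs => rw [hqdecomp]
    simp [hroot n]
  have hinj : Set.InjOn x (Finset.univ : Finset (Fin (k + 1))) := fun a _ b _ h => hx h
  have hcard : r.degree < ((Finset.univ : Finset (Fin (k + 1))).card : WithBot ℕ) := by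
    simpa using hrdeg
  have hinterp : r = Lagrange.interpolate Finset.univ x fun n => r.eval (x n) :=
    Lagrange.eq_interpolate hinj hcard
  have h2 : ∫ t, (P * s).eval t ∂α = 0 := by
    have h := key (k + 1) le_rfl s hsdeg
    simpa [Polynomial.eval_mul] using h
  have h3 : ∫ t, r.eval t ∂α = ∑ n : Fin (k + 1), w n * q.eval (x n) := by
    conv_lhs => rw [hinterp]
    have heval : (fun t : ℝ => (Lagrange.interpolate Finset.univ x
        fun n => r.eval (x n)).eval t) =
        fun t => ∑ n : Fin (k + 1), r.eval (x n) * (Lagrange.basis Finset.univ x n).eval t := by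
      funext t
      rw [Lagrange.interpolate_apply, Polynomial.eval_finset_sum]
      simp
    rw [heval, integral_finset_sum _
      (fun n _ => by simpa using hint (C (r.eval (x n)) * Lagrange.basis Finset.univ x n))]
    refine Finset.sum_congr rfl fun n _ => ?_
    rw [integral_const_mul, ← hw n, hrq n, mul_comm]
  calc ∫ t, q.eval t ∂α
      = ∫ t, ((P * s).eval t + r.eval t) ∂α := by
        refine integral_congr_ae (Filter.Eventually.of_forall fun t => ?_)
        conv_lhs => rw [hqdecomp]
        simp
    _ = (∫ t, (P * s).eval t ∂α) + ∫ t, r.eval t ∂α :=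
        integral_add (hint _) (hint _)
    _ = ∑ n : Fin (k + 1), w n * q.eval (x n) := by rw [h2, h3, zero_add]
end
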